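/- arXiv:1806.06903 — 5 statements merged into one kernel-verified Lean document; each statement's English description precedes it below -/
import Mathlib

section
/- Let c > 0 and let G be an oriented graph on n vertices with minimum semidegree δ⁰(G) ≥ (1/2 - c)n. Then every vertex of G is contained in at least n²/8 - 2cn² cyclic triangles and at most n²/8 + 2cn² cyclic triangles. -/
open Finset
open scoped Classical

/-- An oriented graph: no loops and no pair of antiparallel edges. -/
def IsOriented {n : ℕ} (G : Fin n → Fin n → Prop) : Prop :=
  (∀ v, ¬ G v v) ∧ ∀ u v : Fin n, G u v → ¬ G v u

/-- `d⁺(v, A)`: number of out-neighbors of `v` in `A`. -/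
noncomputable def outDegOn {n : ℕ} (G : Fin n → Fin n → Prop) (v : Fin n)
    (A : Finset (Fin n)) : ℕ :=
  (A.filter fun u => G v u).card

/-- `d⁻(v, A)`: number of in-neighbors of `v` in `A`. -/
noncomputable def inDegOn {n : ℕ} (G : Fin n → Fin n → Prop) (v : Fin n)
    (A : Finset (Fin n)) : ℕ :=
  (A.filter fun u => G u v).card

/-- outdegree `d⁺(v)`. -/
noncomputable def outDeg {n : ℕ} (G : Fin n → Fin n → Prop) (v : Fin n) : ℕ :=
  outDegOn G v univ

/-- indegree `d⁻(v)`. -/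
noncomputable def inDeg {n : ℕ} (G : Fin n → Fin n → Prop) (v : Fin n) : ℕ :=
  inDegOn G v univ

/-- The minimum semidegree condition `δ⁰(G) ≥ b`. -/
def MinSemidegreeGE {n : ℕ} (G : Fin n → Fin n → Prop) (b : ℝ) : Prop :=
  ∀ v : Fin n, b ≤ (outDeg G v : ℝ) ∧ b ≤ (inDeg G v : ℝ)

/-- `e⁺(A, B)`: number of edges directed from `A` to `B`. -/
noncomputable def eOut {n : ℕ} (G : Fin n → Fin n → Prop) (A B : Finset (Fin n)) : ℕ :=
  ∑ a ∈ A, outDegOn G a B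

/-- `s` is the vertex set of a cyclic triangle. -/
def IsCycTri {n : ℕ} (G : Fin n → Fin n → Prop) (s : Finset (Fin n)) : Prop :=
  ∃ a b c : Fin n, G a b ∧ G b c ∧ G c a ∧ s = {a, b, c}

/-- `s` is the vertex set of a transitive triangle. -/
def IsTrnTri {n : ℕ} (G : Fin n → Fin n → Prop) (s : Finset (Fin n)) : Prop :=
  ∃ a b c : Fin n, G a b ∧ G b c ∧ G a c ∧ s = {a, b, c}

/-- `cyc(A)`: number of cyclic triangles with all vertices in `A`. -/
noncomputable def cycIn {n : ℕ} (G : Fin n → Fin n → Prop) (A : Finset (Fin n)) : ℕ :=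
  ((A.powersetCard 3).filter fun s => IsCycTri G s).card

/-- `trn(A)`: number of transitive triangles with all vertices in `A`. -/
noncomputable def trnIn {n : ℕ} (G : Fin n → Fin n → Prop) (A : Finset (Fin n)) : ℕ :=
  ((A.powersetCard 3).filter fun s => IsTrnTri G s).card

/-- `cyc(A, B, C)`: number of cyclic triangles with one vertex in each of `A`, `B`, `C`
(in the sense of some labeling of its vertex set). -/
noncomputable def cyc3 {n : ℕ} (G : Fin n → Fin n → Prop) (A B C : Finset (Fin n)) : ℕ :=
  (((univ : Finset (Fin n)).powersetCard 3).filter fun s =>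
    IsCycTri G s ∧ ∃ x ∈ A, ∃ y ∈ B, ∃ z ∈ C, s = ({x, y, z} : Finset (Fin n))).card

/-- A cyclic triangle tiling: a collection of vertex-disjoint cyclic triangles. -/
def IsCycTiling {n : ℕ} (G : Fin n → Fin n → Prop) (C : Finset (Finset (Fin n))) : Prop :=
  (∀ s ∈ C, IsCycTri G s) ∧ ∀ s ∈ C, ∀ t ∈ C, s ≠ t → Disjoint s t

/-- A cyclic triangle factor: a tiling covering every vertex. -/
def IsCycFactor {n : ℕ} (G : Fin n → Fin n → Prop) (C : Finset (Finset (Fin n))) : Prop :=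
  IsCycTiling G C ∧ C.biUnion id = univ

/-- `W` can be perfectly covered by vertex-disjoint cyclic triangles
(i.e. `H(G)[W]` has a perfect matching). -/
def HasCycPM {n : ℕ} (G : Fin n → Fin n → Prop) (W : Finset (Fin n)) : Prop :=
  ∃ C : Finset (Finset (Fin n)), IsCycTiling G C ∧ C.biUnion id = W

/-- The number of `(H(G), x, y)`-linking `(3ℓ-1)`-sets. -/
noncomputable def linkCount {n : ℕ} (G : Fin n → Fin n → Prop) (ℓ : ℕ) (x y : Fin n) : ℕ :=
  (((univ : Finset (Fin n)).powersetCard (3 * ℓ - 1)).filter fun S =>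
    x ∉ S ∧ y ∉ S ∧ HasCycPM G (insert x S) ∧ HasCycPM G (insert y S)).card

/-!
The cyclic triangles through `v` are exactly `v → u → w → v` with `u ∈ N⁺(v)`, `w ∈ N⁻(v)` and
`u → w`, so there are `e⁺(N⁺(v), N⁻(v))` of them. Every in-neighbour of a vertex `w ∈ N⁻(v)` lies in
`N⁺(v)`, in `N⁻(v)` or among the `n - d⁺(v) - d⁻(v) - 1` vertices outside `N⁺(v) ∪ N⁻(v) ∪ {v}`;
summing over `w ∈ N⁻(v)` and bounding the edges inside `N⁻(v)` by `d⁻(v)²/2` gives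
`e ≥ d⁻(v) (2δ + d⁻(v)/2 - n)`. Summing `d⁺(w) + d⁻(w) ≤ n - d⁻(v) + (degree of w inside N⁻(v))`
over `w ∈ N⁻(v)` gives `e ≤ d⁻(v) (n - δ) - d⁻(v)²/2`. For `δ = (1/2 - c) n` with `c < 1/16` both
bounds are within `2cn²` of `n²/8`; for larger `c` the claim follows from
`0 ≤ e ≤ d⁺(v) d⁻(v) ≤ n²/4`.
-/

variable {n : ℕ} {G : Fin n → Fin n → Prop}

noncomputable def outNbrs (G : Fin n → Fin n → Prop) (v : Fin n) : Finset (Fin n) :=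
  univ.filter (G v ·)

noncomputable def inNbrs (G : Fin n → Fin n → Prop) (v : Fin n) : Finset (Fin n) :=
  univ.filter (G · v)

@[simp] lemma mem_outNbrs {v u : Fin n} : u ∈ outNbrs G v ↔ G v u := by simp [outNbrs]

@[simp] lemma mem_inNbrs {v u : Fin n} : u ∈ inNbrs G v ↔ G u v := by simp [inNbrs]

lemma card_outNbrs (v : Fin n) : (outNbrs G v).card = outDeg G v := rfl

lemma card_inNbrs (v : Fin n) : (inNbrs G v).card = inDeg G v := rfl

lemma inDegOn_union {S T : Finset (Fin n)} (h : Disjoint S T) (w : Fin n) :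
    inDegOn G w (S ∪ T) = inDegOn G w S + inDegOn G w T := by
  rw [inDegOn, filter_union, card_union_of_disjoint (disjoint_filter_filter h)]; rfl

lemma outDegOn_union {S T : Finset (Fin n)} (h : Disjoint S T) (w : Fin n) :
    outDegOn G w (S ∪ T) = outDegOn G w S + outDegOn G w T := by
  rw [outDegOn, filter_union, card_union_of_disjoint (disjoint_filter_filter h)]; rfl

lemma inDegOn_mono {S T : Finset (Fin n)} (h : S ⊆ T) (w : Fin n) :
    inDegOn G w S ≤ inDegOn G w T :=
  card_le_card (filter_subset_filter _ h)

lemma eOut_eq_sum_inDegOn (A B : Finset (Fin n)) : eOut G A B = ∑ w ∈ B, inDegOn G w A := by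
  simp only [eOut, outDegOn, inDegOn, card_filter]
  exact sum_comm

lemma eOut_le_card_mul_card (A B : Finset (Fin n)) : eOut G A B ≤ A.card * B.card := by
  have := sum_le_card_nsmul A (outDegOn G · B) B.card fun _ _ => card_filter_le _ _
  rwa [smul_eq_mul] at this

lemma eOut_eq_card_filter_product (A B : Finset (Fin n)) :
    eOut G A B = ((A ×ˢ B).filter fun p => G p.1 p.2).card := by
  simp only [eOut, outDegOn, card_filter, sum_product]

lemma IsOriented.inDegOn_add_outDegOn_le (hG : IsOriented G) (w : Fin n) (S : Finset (Fin n)) :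
    inDegOn G w S + outDegOn G w S ≤ (S.erase w).card := by
  rw [inDegOn, outDegOn, ← card_union_of_disjoint
    (disjoint_filter.2 fun x _ hxw hwx => hG.2 x w hxw hwx)]
  refine card_le_card fun x hx => ?_
  simp only [mem_union, mem_filter] at hx
  rcases hx with ⟨hxS, hxw⟩ | ⟨hxS, hwx⟩
  · exact mem_erase.2 ⟨fun h => hG.1 w (h ▸ hxw), hxS⟩
  · exact mem_erase.2 ⟨fun h => hG.1 w (h ▸ hwx), hxS⟩

lemma IsOriented.outDeg_add_inDeg_add_one_le (hG : IsOriented G) (v : Fin n) :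
    outDeg G v + inDeg G v + 1 ≤ n := by
  have := hG.inDegOn_add_outDegOn_le v univ
  rw [card_erase_of_mem (mem_univ v), card_univ, Fintype.card_fin] at this
  have := v.pos
  unfold outDeg inDeg
  omega

lemma IsOriented.inDeg_add_outDeg_add_card_le (hG : IsOriented G) (w : Fin n) (S : Finset (Fin n)) :
    inDeg G w + outDeg G w + S.card ≤ inDegOn G w S + outDegOn G w S + n := by
  have hsplit := hG.inDegOn_add_outDegOn_le w Sᶜ
  have hcompl : (Sᶜ.erase w).card + S.card ≤ n := by
    simpa only [card_compl_add_card, Fintype.card_fin] using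
      Nat.add_le_add_right (card_erase_le (s := Sᶜ) (a := w)) S.card
  unfold inDeg outDeg
  rw [← union_compl S, inDegOn_union disjoint_compl_right, outDegOn_union disjoint_compl_right]
  omega

lemma IsOriented.two_mul_eOut_self_add_card_le (hG : IsOriented G) (B : Finset (Fin n)) :
    2 * eOut G B B + B.card ≤ B.card * B.card := by
  have hsum : ∑ w ∈ B, (inDegOn G w B + outDegOn G w B + 1) ≤ ∑ _w ∈ B, B.card :=
    sum_le_sum fun w hw => (card_erase_add_one hw) ▸ Nat.add_le_add_right
      (hG.inDegOn_add_outDegOn_le w B) 1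
  rw [sum_add_distrib, sum_add_distrib, ← eOut_eq_sum_inDegOn] at hsum
  simp only [sum_const, smul_eq_mul, mul_one] at hsum
  unfold eOut at *
  omega

lemma IsOriented.sum_inDeg_add_outDeg_add_sq_le (hG : IsOriented G) (B : Finset (Fin n)) :
    ∑ w ∈ B, inDeg G w + ∑ w ∈ B, outDeg G w + B.card * B.card ≤ 2 * eOut G B B + B.card * n := by
  have hsum := sum_le_sum fun w (_ : w ∈ B) => hG.inDeg_add_outDeg_add_card_le w B
  simp only [sum_add_distrib, sum_const, smul_eq_mul, ← eOut_eq_sum_inDegOn] at hsum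
  unfold eOut at *
  omega

lemma eOut_add_eOut_self_le_sum_inDeg {A B : Finset (Fin n)} (hAB : Disjoint A B) :
    eOut G A B + eOut G B B ≤ ∑ w ∈ B, inDeg G w := by
  rw [eOut_eq_sum_inDegOn, eOut_eq_sum_inDegOn, ← sum_add_distrib]
  exact sum_le_sum fun w _ => (inDegOn_union hAB w).symm ▸ inDegOn_mono (subset_univ _) w

lemma IsOriented.disjoint_outNbrs_inNbrs (hG : IsOriented G) (v : Fin n) :
    Disjoint (outNbrs G v) (inNbrs G v) :=
  disjoint_left.2 fun u hvu huv => hG.2 v u (mem_outNbrs.1 hvu) (mem_inNbrs.1 huv)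

lemma IsOriented.inDeg_add_le_of_mem_inNbrs (hG : IsOriented G) {v w : Fin n}
    (hw : w ∈ inNbrs G v) :
    inDeg G w + (outDeg G v + inDeg G v + 1) ≤
      inDegOn G w (outNbrs G v) + inDegOn G w (inNbrs G v) + n := by
  set R := (outNbrs G v ∪ inNbrs G v)ᶜ
  have hvR : v ∈ R := by simp [R, hG.1 v]
  have hR : inDegOn G w R ≤ (R.erase v).card :=
    card_le_card fun x hx => mem_erase.2
      ⟨fun h => hG.2 w v (mem_inNbrs.1 hw) (h ▸ (mem_filter.1 hx).2), (mem_filter.1 hx).1⟩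
  have hcardR : R.card + (outDeg G v + inDeg G v) = n := by
    have := hG.outDeg_add_inDeg_add_one_le v
    rw [card_compl, card_union_of_disjoint (hG.disjoint_outNbrs_inNbrs v), Fintype.card_fin,
      card_outNbrs, card_inNbrs]
    omega
  have hsplit : inDeg G w =
      inDegOn G w (outNbrs G v) + inDegOn G w (inNbrs G v) + inDegOn G w R := by
    rw [inDeg, ← union_compl (outNbrs G v ∪ inNbrs G v), inDegOn_union disjoint_compl_right,
      inDegOn_union (hG.disjoint_outNbrs_inNbrs v)]
  have := card_erase_add_one hvR
  omega

lemma IsOriented.sum_inDeg_inNbrs_le (hG : IsOriented G) (v : Fin n) :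
    ∑ w ∈ inNbrs G v, inDeg G w + inDeg G v * (outDeg G v + inDeg G v + 1) ≤
      eOut G (outNbrs G v) (inNbrs G v) + eOut G (inNbrs G v) (inNbrs G v) + inDeg G v * n := by
  have hsum := sum_le_sum fun w (hw : w ∈ inNbrs G v) => hG.inDeg_add_le_of_mem_inNbrs hw
  simp only [sum_add_distrib, sum_const, smul_eq_mul, card_inNbrs] at hsum
  rw [eOut_eq_sum_inDegOn, eOut_eq_sum_inDegOn]
  linarith

lemma IsOriented.card_triple (hG : IsOriented G) {v u w : Fin n} (hvu : G v u) (huw : G u w)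
    (hwv : G w v) : ({v, u, w} : Finset (Fin n)).card = 3 := by
  have hne : ∀ {x y}, G x y → x ≠ y := fun hxy h => hG.1 _ (h ▸ hxy)
  rw [card_insert_of_notMem (by simp [hne hvu, (hne hwv).symm]),
    card_pair (hne huw)]

lemma IsOriented.card_cycTri_mem_eq_eOut (hG : IsOriented G) (v : Fin n) :
    (((univ : Finset (Fin n)).powersetCard 3).filter fun s => v ∈ s ∧ IsCycTri G s).card =
      eOut G (outNbrs G v) (inNbrs G v) := by
  rw [eOut_eq_card_filter_product]
  symm
  refine card_bij (fun p _ => ({v, p.1, p.2} : Finset (Fin n))) ?_ ?_ ?_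
  · rintro ⟨u, w⟩ hp
    simp only [mem_filter, mem_product, mem_outNbrs, mem_inNbrs] at hp
    obtain ⟨⟨hvu, hwv⟩, huw⟩ := hp
    simp only [mem_filter, mem_powersetCard, subset_univ, true_and]
    exact ⟨hG.card_triple hvu huw hwv, by simp, v, u, w, hvu, huw, hwv, rfl⟩
  · rintro ⟨u, w⟩ hp ⟨u', w'⟩ hq h
    simp only [mem_filter, mem_product, mem_outNbrs, mem_inNbrs] at hp hq
    have hu' : u' ∈ ({v, u, w} : Finset (Fin n)) := h ▸ by simp
    have hw' : w' ∈ ({v, u, w} : Finset (Fin n)) := h ▸ by simp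
    simp only [mem_insert, mem_singleton] at hu' hw'
    -- `u'` is neither `v` (no loops) nor `w` (`v → u'` and `w → v`); symmetrically for `w'`.
    have hloop := hG.1
    have hanti := hG.2
    grind
  · intro s hs
    simp only [mem_filter, mem_powersetCard] at hs
    obtain ⟨-, hvs, a, b, c, hab, hbc, hca, rfl⟩ := hs
    simp only [mem_insert, mem_singleton] at hvs
    rcases hvs with rfl | rfl | rfl
    · exact ⟨(b, c), by simp [hab, hbc, hca], rfl⟩
    · exact ⟨(c, a), by simp [hab, hbc, hca], by ext; simp; tauto⟩
    · exact ⟨(a, b), by simp [hab, hbc, hca], by ext; simp; tauto⟩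

lemma MinSemidegreeGE.mul_le_sum_inDeg {δ : ℝ} (hdeg : MinSemidegreeGE G δ) (B : Finset (Fin n)) :
    B.card * δ ≤ ∑ w ∈ B, (inDeg G w : ℝ) := by
  simpa using card_nsmul_le_sum B _ δ fun w _ => (hdeg w).2

lemma MinSemidegreeGE.mul_le_sum_outDeg {δ : ℝ} (hdeg : MinSemidegreeGE G δ) (B : Finset (Fin n)) :
    B.card * δ ≤ ∑ w ∈ B, (outDeg G w : ℝ) := by
  simpa using card_nsmul_le_sum B _ δ fun w _ => (hdeg w).1

lemma IsOriented.eOut_nbrs_ge (hG : IsOriented G) {δ : ℝ} (hdeg : MinSemidegreeGE G δ)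
    (v : Fin n) :
    (inDeg G v : ℝ) * (2 * δ + inDeg G v / 2 - n) ≤ eOut G (outNbrs G v) (inNbrs G v) := by
  have hsum : (∑ w ∈ inNbrs G v, inDeg G w : ℝ) + inDeg G v * (outDeg G v + inDeg G v + 1) ≤
      eOut G (outNbrs G v) (inNbrs G v) + eOut G (inNbrs G v) (inNbrs G v) + inDeg G v * n := by
    exact_mod_cast hG.sum_inDeg_inNbrs_le v
  have hself : 2 * (eOut G (inNbrs G v) (inNbrs G v) : ℝ) + inDeg G v ≤ inDeg G v * inDeg G v := by
    exact_mod_cast card_inNbrs (G := G) v ▸ hG.two_mul_eOut_self_add_card_le (inNbrs G v)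
  have hin := hdeg.mul_le_sum_inDeg (inNbrs G v)
  rw [card_inNbrs] at hin
  nlinarith [(hdeg v).1, (inDeg G v).cast_nonneg (α := ℝ)]

lemma IsOriented.eOut_nbrs_le (hG : IsOriented G) {δ : ℝ} (hdeg : MinSemidegreeGE G δ)
    (v : Fin n) :
    (eOut G (outNbrs G v) (inNbrs G v) : ℝ) ≤ inDeg G v * (n - δ) - (inDeg G v : ℝ) ^ 2 / 2 := by
  have hin : (eOut G (outNbrs G v) (inNbrs G v) + eOut G (inNbrs G v) (inNbrs G v) : ℝ) ≤
      ∑ w ∈ inNbrs G v, (inDeg G w : ℝ) := by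
    exact_mod_cast eOut_add_eOut_self_le_sum_inDeg (hG.disjoint_outNbrs_inNbrs v)
  have hdegs : ∑ w ∈ inNbrs G v, (inDeg G w : ℝ) + ∑ w ∈ inNbrs G v, (outDeg G w : ℝ) +
      inDeg G v * inDeg G v ≤ 2 * eOut G (inNbrs G v) (inNbrs G v) + inDeg G v * n := by
    exact_mod_cast card_inNbrs (G := G) v ▸ hG.sum_inDeg_add_outDeg_add_sq_le (inNbrs G v)
  have hself : 2 * (eOut G (inNbrs G v) (inNbrs G v) : ℝ) + inDeg G v ≤ inDeg G v * inDeg G v := by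
    exact_mod_cast card_inNbrs (G := G) v ▸ hG.two_mul_eOut_self_add_card_le (inNbrs G v)
  have hout := hdeg.mul_le_sum_outDeg (inNbrs G v)
  rw [card_inNbrs] at hout
  nlinarith [(inDeg G v).cast_nonneg (α := ℝ)]

theorem stmt_1_general (c : ℝ) (n : ℕ) (G : Fin n → Fin n → Prop)
    (hG : IsOriented G) (hdeg : MinSemidegreeGE G ((1/2 - c) * n)) :
    ∀ v : Fin n,
      (n : ℝ)^2 / 8 - 2 * c * n^2 ≤
        ((((univ : Finset (Fin n)).powersetCard 3).filter fun s =>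
          v ∈ s ∧ IsCycTri G s).card : ℝ) ∧
      ((((univ : Finset (Fin n)).powersetCard 3).filter fun s =>
          v ∈ s ∧ IsCycTri G s).card : ℝ) ≤ (n : ℝ)^2 / 8 + 2 * c * n^2 := by
  intro v
  rw [hG.card_cycTri_mem_eq_eOut v]
  have hlower := hG.eOut_nbrs_ge hdeg v
  have hupper := hG.eOut_nbrs_le hdeg v
  have hab : (outDeg G v + inDeg G v + 1 : ℝ) ≤ n := by
    exact_mod_cast hG.outDeg_add_inDeg_add_one_le v
  have htriv : (eOut G (outNbrs G v) (inNbrs G v) : ℝ) ≤ outDeg G v * inDeg G v := by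
    exact_mod_cast eOut_le_card_mul_card (G := G) (outNbrs G v) (inNbrs G v)
  have ha := (outDeg G v).cast_nonneg (α := ℝ)
  have hb := (inDeg G v).cast_nonneg (α := ℝ)
  have hN := (eOut G (outNbrs G v) (inNbrs G v)).cast_nonneg (α := ℝ)
  obtain ⟨hout, hin⟩ := hdeg v
  rcases lt_or_ge c (1 / 16) with hsmall | hlarge
  · constructor
    · nlinarith [mul_nonneg (sub_nonneg.2 hin) hb, sq_nonneg (n : ℝ)]
    · nlinarith [sq_nonneg ((inDeg G v : ℝ) - (n - (1/2 - c) * n)), sq_nonneg (n : ℝ)]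
  · constructor
    · nlinarith [sq_nonneg (n : ℝ)]
    · nlinarith [sq_nonneg ((outDeg G v : ℝ) - inDeg G v), sq_nonneg (n : ℝ)]

theorem stmt_1 (c : ℝ) (hc : 0 < c) (n : ℕ) (G : Fin n → Fin n → Prop)
    (hG : IsOriented G) (hdeg : MinSemidegreeGE G ((1/2 - c) * n)) :
    ∀ v : Fin n,
      (n : ℝ)^2 / 8 - 2 * c * n^2 ≤
        ((((univ : Finset (Fin n)).powersetCard 3).filter fun s =>
          v ∈ s ∧ IsCycTri G s).card : ℝ) ∧
      ((((univ : Finset (Fin n)).powersetCard 3).filter fun s =>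
          v ∈ s ∧ IsCycTri G s).card : ℝ) ≤ (n : ℝ)^2 / 8 + 2 * c * n^2 :=
  stmt_1_general c n G hG hdeg
end

section
/- Let c > 0 and let G be an oriented graph on n vertices with minimum semidegree δ⁰(G) ≥ (1/2 - c)n. Then for every directed edge uv of G, the quantity d⁻'⁺(uv) - d⁺'⁻(uv) is between -4cn and 4cn, where d⁻'⁺(uv) = |N⁻(u) ∩ N⁺(v)| and d⁺'⁻(uv) = |N⁺(u) ∩ N⁻(v)|. -/
open Finset
open scoped Classical

/-!
The vertices `w` closing a cyclic triangle on `uv` (`w → u`, `v → w`) lie outside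
`N⁺(u) ∪ N⁻(v)`, whose size is `d⁺(u) + d⁻(v) - d⁺'⁻(uv)`; hence
`d⁻'⁺(uv) - d⁺'⁻(uv) ≤ n - d⁺(u) - d⁻(v) ≤ 2cn`. Reversing all edges gives the other bound.
-/

theorem card_cyc_add_outDeg_add_inDeg_le {n : ℕ} {G : Fin n → Fin n → Prop}
    (hG : ∀ a b, G a b → ¬ G b a) (u v : Fin n) :
    #{w | G w u ∧ G v w} + (outDeg G u + inDeg G v) ≤ n + #{w | G u w ∧ G w v} := by
  have hdisj : Disjoint ({w | G w u ∧ G v w} : Finset (Fin n))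
      (({w | G u w} : Finset (Fin n)) ∪ ({w | G w v} : Finset (Fin n))) := by
    rw [disjoint_left]
    simp only [mem_filter, mem_univ, true_and, mem_union]
    rintro w ⟨hwu, hvw⟩ (huw | hwv)
    exacts [hG _ _ hwu huw, hG _ _ hvw hwv]
  rw [outDeg, inDeg, outDegOn, inDegOn, ← card_union_add_card_inter, ← filter_and, ← add_assoc,
    ← card_union_of_disjoint hdisj]
  exact Nat.add_le_add_right ((card_le_univ _).trans_eq (Fintype.card_fin n)) _

theorem stmt_2 (c : ℝ) (hc : 0 < c) (n : ℕ) (G : Fin n → Fin n → Prop)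
    (hG : IsOriented G) (hdeg : MinSemidegreeGE G ((1/2 - c) * n)) :
    ∀ u v : Fin n, G u v →
      -(4 * c * n) ≤
          ((((univ : Finset (Fin n)).filter fun w => G w u ∧ G v w).card : ℝ) -
            (((univ : Finset (Fin n)).filter fun w => G u w ∧ G w v).card : ℝ)) ∧
      ((((univ : Finset (Fin n)).filter fun w => G w u ∧ G v w).card : ℝ) -
            (((univ : Finset (Fin n)).filter fun w => G u w ∧ G w v).card : ℝ)) ≤
        4 * c * n := by
  intro u v _
  have hcyc : (#{w | G w u ∧ G v w} + (outDeg G u + inDeg G v) : ℝ) ≤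
      n + #{w | G u w ∧ G w v} := by
    exact_mod_cast card_cyc_add_outDeg_add_inDeg_le hG.2 u v
  have htrn : (#{w | G u w ∧ G w v} + (inDeg G u + outDeg G v) : ℝ) ≤
      n + #{w | G w u ∧ G v w} := by
    exact_mod_cast card_cyc_add_outDeg_add_inDeg_le (G := fun a b => G b a)
      (fun a b hba hab => hG.2 a b hab hba) u v
  have hcn : 0 ≤ c * n := by positivity
  obtain ⟨hu_out, hu_in⟩ := hdeg u
  obtain ⟨hv_out, hv_in⟩ := hdeg v
  constructor <;> linarith
end

section
/- Suppose n is a multiple of 3, G is a tournament on n = 3m vertices, and the vertex set of G admits a partition {V₁, V₂, V₃} with |V₁| = m-1, |V₂| = m, |V₃| = m+1 such that no edges are directed from V₂ to V₁, from V₃ to V₂, or from V₁ to V₃. Then G has no cyclic triangle factor. -/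
open Finset
open scoped Classical

/-!
Label each vertex of `V₁, V₂, V₃` by `0, 1, 2 ∈ ZMod 3`. Since all edges between parts go
`V₁ → V₂ → V₃ → V₁`, along every edge the label stays put or goes up by one, so going once around
a cyclic triangle the label either never moves or moves by one at each of the three steps. Either
way the labels of a cyclic triangle sum to `0`, hence so do the labels of all vertices when a
cyclic triangle factor exists. But that total is `|V₂| + 2|V₃| = 3m + 2 ≡ 2`.
-/

def IsCyclicLabeling {n : ℕ} (G : Fin n → Fin n → Prop) (ℓ : Fin n → ZMod 3) : Prop :=
  ∀ u v, G u v → ℓ v = ℓ u ∨ ℓ v = ℓ u + 1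

theorem ZMod.three_add_add_eq_zero_of_steps :
    ∀ x y z : ZMod 3, (y = x ∨ y = x + 1) → (z = y ∨ z = y + 1) → (x = z ∨ x = z + 1) →
      x + y + z = 0 := by
  decide

section Labeling

variable {n : ℕ} {G : Fin n → Fin n → Prop} {ℓ : Fin n → ZMod 3}

theorem IsCycTri.sum_eq_zero (hG : IsOriented G) (hℓ : IsCyclicLabeling G ℓ)
    {s : Finset (Fin n)} (hs : IsCycTri G s) : ∑ v ∈ s, ℓ v = 0 := by
  obtain ⟨a, b, c, hab, hbc, hca, rfl⟩ := hs
  have hab_ne : a ≠ b := fun h => hG.1 a (h ▸ hab)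
  have hbc_ne : b ≠ c := fun h => hG.1 b (h ▸ hbc)
  have hac_ne : a ≠ c := fun h => hG.2 b c hbc (h ▸ hab)
  rw [sum_insert (by simp [hab_ne, hac_ne]), sum_pair hbc_ne, ← add_assoc]
  exact ZMod.three_add_add_eq_zero_of_steps _ _ _ (hℓ a b hab) (hℓ b c hbc) (hℓ c a hca)

theorem IsCycFactor.sum_eq_zero (hG : IsOriented G) (hℓ : IsCyclicLabeling G ℓ)
    {C : Finset (Finset (Fin n))} (hC : IsCycFactor G C) : ∑ v, ℓ v = 0 := by
  obtain ⟨⟨htri, hdisj⟩, hcov⟩ := hC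
  rw [← hcov, sum_biUnion (t := id) fun s hs t ht hst => hdisj s hs t ht hst]
  exact Finset.sum_eq_zero fun s hs => (htri s hs).sum_eq_zero hG hℓ

end Labeling

section Partition

variable {n : ℕ} {V1 V2 V3 : Finset (Fin n)}

/-- `V₃` is left implicit: it gets label `2` as the complement of `V₁ ∪ V₂`. -/
noncomputable def partLabel (V1 V2 : Finset (Fin n)) (v : Fin n) : ZMod 3 :=
  if v ∈ V1 then 0 else if v ∈ V2 then 1 else 2

theorem partLabel_of_mem_left {v : Fin n} (hv : v ∈ V1) : partLabel V1 V2 v = 0 := by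
  simp [partLabel, hv]

theorem partLabel_of_mem_middle (h12 : Disjoint V1 V2) {v : Fin n} (hv : v ∈ V2) :
    partLabel V1 V2 v = 1 := by
  simp [partLabel, hv, disjoint_right.mp h12 hv]

theorem partLabel_of_mem_right (h13 : Disjoint V1 V3) (h23 : Disjoint V2 V3) {v : Fin n}
    (hv : v ∈ V3) : partLabel V1 V2 v = 2 := by
  simp [partLabel, disjoint_right.mp h13 hv, disjoint_right.mp h23 hv]

theorem isCyclicLabeling_partLabel {G : Fin n → Fin n → Prop}
    (h12 : Disjoint V1 V2) (h13 : Disjoint V1 V3) (h23 : Disjoint V2 V3)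
    (hcover : V1 ∪ V2 ∪ V3 = univ)
    (e21 : ∀ x ∈ V2, ∀ y ∈ V1, ¬ G x y)
    (e32 : ∀ x ∈ V3, ∀ y ∈ V2, ¬ G x y)
    (e13 : ∀ x ∈ V1, ∀ y ∈ V3, ¬ G x y) :
    IsCyclicLabeling G (partLabel V1 V2) := by
  have hpart : ∀ v, v ∈ V1 ∨ v ∈ V2 ∨ v ∈ V3 := fun v => by
    simpa [or_assoc] using hcover.ge (mem_univ v)
  intro u v huv
  rcases hpart u with hu | hu | hu <;> rcases hpart v with hv | hv | hv <;>
    first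
    | exact absurd huv (e21 u hu v hv)
    | exact absurd huv (e32 u hu v hv)
    | exact absurd huv (e13 u hu v hv)
    | simp only [partLabel_of_mem_left, partLabel_of_mem_middle h12,
        partLabel_of_mem_right h13 h23, hu, hv]
      decide

theorem sum_partLabel (h12 : Disjoint V1 V2) (h13 : Disjoint V1 V3) (h23 : Disjoint V2 V3)
    (hcover : V1 ∪ V2 ∪ V3 = univ) :
    ∑ v, partLabel V1 V2 v = V2.card + 2 * V3.card := by
  rw [← hcover, sum_union (disjoint_union_left.mpr ⟨h13, h23⟩), sum_union h12,
    sum_eq_zero fun v => partLabel_of_mem_left, sum_congr rfl fun v => partLabel_of_mem_middle h12,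
    sum_congr rfl fun v => partLabel_of_mem_right h13 h23]
  simp [mul_comm]

end Partition

theorem stmt_4_general (m n : ℕ)
    (G : Fin n → Fin n → Prop) (hG : IsOriented G)
    (V1 V2 V3 : Finset (Fin n))
    (h12 : Disjoint V1 V2) (h13 : Disjoint V1 V3) (h23 : Disjoint V2 V3)
    (hcover : V1 ∪ V2 ∪ V3 = univ)
    (hc2 : V2.card = m) (hc3 : V3.card = m + 1)
    (e21 : ∀ x ∈ V2, ∀ y ∈ V1, ¬ G x y)
    (e32 : ∀ x ∈ V3, ∀ y ∈ V2, ¬ G x y)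
    (e13 : ∀ x ∈ V1, ∀ y ∈ V3, ¬ G x y) :
    ¬ ∃ C : Finset (Finset (Fin n)), IsCycFactor G C := by
  rintro ⟨C, hC⟩
  have hzero := hC.sum_eq_zero hG (isCyclicLabeling_partLabel h12 h13 h23 hcover e21 e32 e13)
  rw [sum_partLabel h12 h13 h23 hcover, hc2, hc3] at hzero
  have hthree : (3 : ZMod 3) = 0 := rfl
  have htwo : (2 : ZMod 3) = 0 := by
    push_cast at hzero
    linear_combination hzero - (m : ZMod 3) * hthree
  exact absurd htwo (by decide)

theorem stmt_4 (m n : ℕ) (hm : 1 ≤ m) (hn : n = 3 * m)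
    (G : Fin n → Fin n → Prop) (hG : IsOriented G)
    (htour : ∀ u v : Fin n, u ≠ v → G u v ∨ G v u)
    (V1 V2 V3 : Finset (Fin n))
    (h12 : Disjoint V1 V2) (h13 : Disjoint V1 V3) (h23 : Disjoint V2 V3)
    (hcover : V1 ∪ V2 ∪ V3 = univ)
    (hc1 : V1.card = m - 1) (hc2 : V2.card = m) (hc3 : V3.card = m + 1)
    (e21 : ∀ x ∈ V2, ∀ y ∈ V1, ¬ G x y)
    (e32 : ∀ x ∈ V3, ∀ y ∈ V2, ¬ G x y)
    (e13 : ∀ x ∈ V1, ∀ y ∈ V3, ¬ G x y) :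
    ¬ ∃ C : Finset (Finset (Fin n)), IsCycFactor G C :=
  stmt_4_general m n G hG V1 V2 V3 h12 h13 h23 hcover hc2 hc3 e21 e32 e13
end

section
/- Let n be divisible by 3 and let G be an oriented graph on n vertices with minimum semidegree δ⁰(G) ≥ n/2 - 1. Suppose {V₁, V₂, V₃} is a partition of V(G) such that no edges are directed from V₂ to V₁, from V₃ to V₂, or from V₁ to V₃. Then |V₁| ≡ |V₂| ≡ |V₃| (mod 3), i.e., this partition is not a divisibility barrier. (In particular G with these hypotheses has no divisibility barrier.) -/
open Finset
open scoped Classical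

/-!
Suppose `V₁` is nonempty. No edge leaves `V₁` towards `V₃`, so every out-neighbour of a vertex of
`V₁` lies in `V₁ ∪ V₂`. Inside `V₁` the out-degrees average to less than `|V₁|/2`, so some
`v ∈ V₁` has `2 d⁺(v) < |V₁| + 2|V₂|`, and `δ⁰(G) ≥ n/2 - 1` forces `|V₃| ≤ |V₂| + 1`. The same
argument for in-degrees (no edge enters `V₁` from `V₂`) gives `|V₂| ≤ |V₃| + 1`. Doing this for
each nonempty part leaves only partitions whose part sizes are all congruent mod `3`.
-/

namespace IsOriented

variable {n : ℕ} {G : Fin n → Fin n → Prop}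

lemma flip (hG : IsOriented G) : IsOriented (flip G) :=
  ⟨hG.1, fun u v h h' => hG.2 v u h h'⟩

lemma outDegOn_add_inDegOn_lt_card (hG : IsOriented G) {A : Finset (Fin n)} {v : Fin n}
    (hv : v ∈ A) : outDegOn G v A + inDegOn G v A < #A := by
  have hdisj : Disjoint (A.filter (G v ·)) (A.filter (G · v)) :=
    disjoint_filter.2 fun u _ hvu huv => hG.2 v u hvu huv
  have hsub : A.filter (G v ·) ∪ A.filter (G · v) ⊆ A.erase v := by
    intro u
    simp only [mem_union, mem_filter, mem_erase]
    rintro (⟨hu, h⟩ | ⟨hu, h⟩) <;> refine ⟨?_, hu⟩ <;> rintro rfl <;> exact hG.1 _ h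
  rw [outDegOn, inDegOn, ← card_union_of_disjoint hdisj]
  exact (card_le_card hsub).trans_lt (card_erase_lt_of_mem hv)

end IsOriented

section Degrees

variable {n : ℕ} (G : Fin n → Fin n → Prop)

lemma sum_outDegOn_eq_sum_inDegOn (A : Finset (Fin n)) :
    ∑ v ∈ A, outDegOn G v A = ∑ v ∈ A, inDegOn G v A := by
  simp_rw [outDegOn, inDegOn, card_filter]
  exact sum_comm

lemma outDeg_flip (v : Fin n) : outDeg (flip G) v = inDeg G v := rfl

variable {G}

lemma IsOriented.exists_two_mul_outDegOn_lt_card (hG : IsOriented G) {A : Finset (Fin n)}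
    (hA : A.Nonempty) : ∃ v ∈ A, 2 * outDegOn G v A < #A := by
  by_contra! hbig
  have hlt : ∑ _v ∈ A, #A < ∑ _v ∈ A, #A :=
    calc ∑ _v ∈ A, #A ≤ ∑ v ∈ A, 2 * outDegOn G v A := sum_le_sum hbig
      _ = ∑ v ∈ A, (outDegOn G v A + inDegOn G v A) := by
        rw [sum_add_distrib, ← sum_outDegOn_eq_sum_inDegOn, ← mul_sum, two_mul]
      _ < ∑ _v ∈ A, #A :=
        sum_lt_sum_of_nonempty hA fun _ hv => hG.outDegOn_add_inDegOn_lt_card hv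
  exact lt_irrefl _ hlt

lemma outDeg_le_outDegOn_add_card {A B : Finset (Fin n)} {v : Fin n}
    (hout : ∀ u, G v u → u ∈ A ∨ u ∈ B) : outDeg G v ≤ outDegOn G v A + #B :=
  calc outDeg G v ≤ #(A.filter (G v ·) ∪ B) := by
        unfold outDeg outDegOn
        refine card_le_card fun u hu => ?_
        have hvu := (mem_filter.1 hu).2
        rcases hout u hvu with h | h
        · exact mem_union_left _ (mem_filter.2 ⟨h, hvu⟩)
        · exact mem_union_right _ h
    _ ≤ outDegOn G v A + #B := card_union_le _ _

lemma MinSemidegreeGE.le_two_mul_outDeg_add_two (hdeg : MinSemidegreeGE G ((n : ℝ) / 2 - 1))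
    (v : Fin n) : n ≤ 2 * outDeg G v + 2 := by
  have := (hdeg v).1
  exact_mod_cast (by linarith : (n : ℝ) ≤ 2 * outDeg G v + 2)

lemma MinSemidegreeGE.le_two_mul_inDeg_add_two (hdeg : MinSemidegreeGE G ((n : ℝ) / 2 - 1))
    (v : Fin n) : n ≤ 2 * inDeg G v + 2 := by
  have := (hdeg v).2
  exact_mod_cast (by linarith : (n : ℝ) ≤ 2 * inDeg G v + 2)

end Degrees

section Partition

variable {n : ℕ} {G : Fin n → Fin n → Prop} {A B C : Finset (Fin n)}

lemma IsOriented.card_le_card_add_one_of_forall_not_adj (hG : IsOriented G)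
    (hdeg : ∀ v, n ≤ 2 * outDeg G v + 2) (hcover : ∀ v, v ∈ A ∨ v ∈ B ∨ v ∈ C)
    (hcard : #A + #B + #C = n) (hAC : ∀ x ∈ A, ∀ y ∈ C, ¬ G x y) (hA : A.Nonempty) :
    #C ≤ #B + 1 := by
  obtain ⟨v, hv, hsmall⟩ := hG.exists_two_mul_outDegOn_lt_card hA
  have hout : outDeg G v ≤ outDegOn G v A + #B := outDeg_le_outDegOn_add_card fun u hvu =>
    (hcover u).imp_right fun h => h.resolve_right fun hu => hAC v hv u hu hvu
  have := hdeg v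
  omega

lemma IsOriented.card_le_card_add_one_and_card_le_card_add_one (hG : IsOriented G)
    (hdeg : MinSemidegreeGE G ((n : ℝ) / 2 - 1)) (hcover : ∀ v, v ∈ A ∨ v ∈ B ∨ v ∈ C)
    (hcard : #A + #B + #C = n) (hAC : ∀ x ∈ A, ∀ y ∈ C, ¬ G x y)
    (hBA : ∀ x ∈ B, ∀ y ∈ A, ¬ G x y) (hA : A.Nonempty) :
    #C ≤ #B + 1 ∧ #B ≤ #C + 1 :=
  ⟨hG.card_le_card_add_one_of_forall_not_adj hdeg.le_two_mul_outDeg_add_two hcover hcard hAC hA,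
    hG.flip.card_le_card_add_one_of_forall_not_adj
      (fun v => (outDeg_flip G v).symm ▸ hdeg.le_two_mul_inDeg_add_two v)
      (fun v => (hcover v).imp_right Or.symm) (by omega) (fun x hx y hy => hBA y hy x hx) hA⟩

end Partition

lemma Nat.mod_three_eq_of_pos_imp (a b c : ℕ) (h : 3 ∣ a + b + c)
    (ha : 0 < a → c ≤ b + 1 ∧ b ≤ c + 1) (hb : 0 < b → a ≤ c + 1 ∧ c ≤ a + 1)
    (hc : 0 < c → b ≤ a + 1 ∧ a ≤ b + 1) : a % 3 = b % 3 ∧ b % 3 = c % 3 := by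
  by_cases ha : 0 < a <;> by_cases hb : 0 < b <;> by_cases hc : 0 < c
  all_goals first | omega | (obtain ⟨rfl, rfl⟩ : a = b ∧ b = c := by omega); omega

theorem stmt_6 (n : ℕ) (hn : 3 ∣ n) (G : Fin n → Fin n → Prop) (hG : IsOriented G)
    (hdeg : MinSemidegreeGE G ((n : ℝ)/2 - 1))
    (V1 V2 V3 : Finset (Fin n))
    (h12 : Disjoint V1 V2) (h13 : Disjoint V1 V3) (h23 : Disjoint V2 V3)
    (hcover : V1 ∪ V2 ∪ V3 = univ)
    (e21 : ∀ x ∈ V2, ∀ y ∈ V1, ¬ G x y)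
    (e32 : ∀ x ∈ V3, ∀ y ∈ V2, ¬ G x y)
    (e13 : ∀ x ∈ V1, ∀ y ∈ V3, ¬ G x y) :
    V1.card % 3 = V2.card % 3 ∧ V2.card % 3 = V3.card % 3 := by
  have hmem : ∀ v, v ∈ V1 ∨ v ∈ V2 ∨ v ∈ V3 := fun v => by
    simpa only [mem_union, or_assoc] using hcover.ge (mem_univ v)
  have hcard : #V1 + #V2 + #V3 = n := by
    rw [← card_union_of_disjoint h12, ← card_union_of_disjoint (disjoint_union_left.2 ⟨h13, h23⟩),
      hcover, card_univ, Fintype.card_fin]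
  refine Nat.mod_three_eq_of_pos_imp _ _ _ (by rwa [hcard]) ?_ ?_ ?_ <;> intro hpos
  · exact hG.card_le_card_add_one_and_card_le_card_add_one hdeg hmem hcard e13 e21
      (card_pos.1 hpos)
  · exact hG.card_le_card_add_one_and_card_le_card_add_one hdeg (fun v => (hmem v).rotate)
      (by omega) e21 e32 (card_pos.1 hpos)
  · exact hG.card_le_card_add_one_and_card_le_card_add_one hdeg (fun v => (hmem v).rotate.rotate)
      (by omega) e32 e13 (card_pos.1 hpos)
end

section
/- Let c > 0, let G be an oriented graph on n vertices with δ⁰(G) ≥ (1/2 - c)n, and let A ⊆ V(G). Then the number of transitive triangles contained in A satisfies trn(A) ≥ |A|³/8 - cn³, and consequently 3·cyc(A) - trn(A) ≤ 4cn³. -/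
open Finset
open scoped Classical

/-! Every vertex has at most `2cn - 1` non-neighbours, so a set `S` spans at least
`|S|(|S| - 2cn)/2` edges. A transitive triangle is counted once at its source and once at its
sink, hence `4 trn(A) ≥ ∑_{v ∈ A} (d⁺(d⁺ - 2cn) + d⁻(d⁻ - 2cn))` with `d⁺ = d⁺(v, A)`,
`d⁻ = d⁻(v, A)`.
Since `|A| - 2cn ≤ d⁺ + d⁻ ≤ |A|`, convexity bounds each summand below by `|A|²/2 - 4cn²`.
The second inequality then follows from `cyc(A) + trn(A) ≤ |A|³/6`. -/

noncomputable def nonadjDegOn {n : ℕ} (G : Fin n → Fin n → Prop) (v : Fin n)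
    (A : Finset (Fin n)) : ℕ :=
  (A.filter fun u => u ≠ v ∧ ¬ G v u ∧ ¬ G u v).card

lemma eq_or_eq_or_eq_of_insert_eq {α : Type*} [DecidableEq α] {a₁ a₂ a₃ b₁ b₂ b₃ : α}
    (h : ({a₁, a₂, a₃} : Finset α) = {b₁, b₂, b₃}) (x : α) :
    x = b₁ ∨ x = b₂ ∨ x = b₃ → x = a₁ ∨ x = a₂ ∨ x = a₃ := by
  intro hx
  have hx' : x ∈ ({a₁, a₂, a₃} : Finset α) := by rw [h]; simpa using hx
  simpa using hx'

lemma half_sq_sub_le_mul_sub_add_mul_sub {a k m s t : ℝ} (hs : 0 ≤ s) (ht : 0 ≤ t)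
    (hlo : a - k ≤ s + t) (hhi : s + t ≤ a) (ham : a ≤ m) :
    a ^ 2 / 2 - 2 * k * m ≤ s * (s - k) + t * (t - k) := by
  have hk : 0 ≤ k := by linarith
  rcases le_total k a with hka | hak
  · nlinarith [sq_nonneg (s - t), mul_le_mul hlo hlo (by linarith) (by linarith)]
  · nlinarith [sq_nonneg (s - t), mul_le_mul_of_nonneg_left hak (by linarith : 0 ≤ a)]

section Oriented

variable {n : ℕ} {G : Fin n → Fin n → Prop}

lemma card_eq_one_add_outDegOn_add_inDegOn_add_nonadjDegOn (hG : IsOriented G)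
    {v : Fin n} {S : Finset (Fin n)} (hv : v ∈ S) :
    S.card = 1 + outDegOn G v S + inDegOn G v S + nonadjDegOn G v S := by
  obtain ⟨hirr, hasym⟩ := hG
  unfold outDegOn inDegOn nonadjDegOn
  rw [← card_singleton v, ← card_union_of_disjoint, ← card_union_of_disjoint,
    ← card_union_of_disjoint]
  · congr 1
    ext u
    simp only [mem_union, mem_singleton, mem_filter]
    constructor
    · intro hu; by_cases huv : u = v <;> tauto
    · rintro (((rfl | h) | h) | h) <;> tauto
  all_goals
    simp only [disjoint_left, mem_union, mem_singleton, mem_filter]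
    rintro u
  · rintro (((rfl | h) | h)) h' <;> tauto
  · rintro (rfl | h) h'
    · exact hirr _ h'.2
    · exact hasym _ _ h.2 h'.2
  · rintro rfl h
    exact hirr _ h.2

lemma nonadjDegOn_mono (v : Fin n) {S T : Finset (Fin n)} (h : S ⊆ T) :
    nonadjDegOn G v S ≤ nonadjDegOn G v T :=
  card_le_card (filter_subset_filter _ h)

lemma eOut_self_eq_sum_inDegOn (S : Finset (Fin n)) :
    eOut G S S = ∑ u ∈ S, inDegOn G u S := by
  simp only [eOut, outDegOn, inDegOn, card_filter]
  exact sum_comm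

lemma nonadjDegOn_univ_le (hG : IsOriented G) {b : ℝ} (hδ : MinSemidegreeGE G b) (v : Fin n) :
    (nonadjDegOn G v univ : ℝ) ≤ n - 1 - 2 * b := by
  have h := card_eq_one_add_outDegOn_add_inDegOn_add_nonadjDegOn hG (mem_univ v)
  rw [card_univ, Fintype.card_fin] at h
  have := hδ v
  unfold outDeg inDeg at this
  have hR : (n : ℝ) = 1 + outDegOn G v univ + inDegOn G v univ + nonadjDegOn G v univ := by
    exact_mod_cast h
  linarith

lemma card_mul_le_two_mul_eOut (hG : IsOriented G) {S : Finset (Fin n)} {r : ℝ}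
    (hr : ∀ v ∈ S, (nonadjDegOn G v S : ℝ) ≤ r) :
    (S.card : ℝ) * (S.card - 1 - r) ≤ 2 * eOut G S S := by
  have hdeg : ∀ v ∈ S, (S.card : ℝ) - 1 - r ≤ outDegOn G v S + inDegOn G v S := by
    intro v hv
    have h := card_eq_one_add_outDegOn_add_inDegOn_add_nonadjDegOn hG hv
    have hR : (S.card : ℝ) = 1 + outDegOn G v S + inDegOn G v S + nonadjDegOn G v S := by
      exact_mod_cast h
    linarith [hr v hv]
  calc (S.card : ℝ) * (S.card - 1 - r) ≤ ∑ v ∈ S, ((outDegOn G v S : ℝ) + inDegOn G v S) := by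
        simpa using card_nsmul_le_sum S _ _ hdeg
    _ = 2 * eOut G S S := by
        rw [sum_add_distrib, two_mul]
        nth_rw 2 [eOut_self_eq_sum_inDegOn]
        simp [eOut]

lemma IsOriented.eq_of_transitive_of_transitive (hG : IsOriented G) {a₁ a₂ a₃ b₁ b₂ b₃ : Fin n}
    (ha : G a₁ a₂ ∧ G a₂ a₃ ∧ G a₁ a₃) (hb : G b₁ b₂ ∧ G b₂ b₃ ∧ G b₁ b₃)
    (h : ({a₁, a₂, a₃} : Finset (Fin n)) = {b₁, b₂, b₃}) : a₁ = b₁ ∧ a₂ = b₂ ∧ a₃ = b₃ := by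
  have hmem := eq_or_eq_or_eq_of_insert_eq h
  obtain ⟨hirr, hasym⟩ := hG
  rcases hmem b₁ (by simp) with rfl | rfl | rfl <;> rcases hmem b₂ (by simp) with rfl | rfl | rfl <;>
    rcases hmem b₃ (by simp) with rfl | rfl | rfl <;> grind

lemma IsOriented.not_isCycTri_and_isTrnTri (hG : IsOriented G) (s : Finset (Fin n)) :
    ¬ (IsCycTri G s ∧ IsTrnTri G s) := by
  rintro ⟨⟨a₁, a₂, a₃, ha₁, ha₂, ha₃, rfl⟩, b₁, b₂, b₃, hb₁, hb₂, hb₃, h⟩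
  have hmem := eq_or_eq_or_eq_of_insert_eq h
  obtain ⟨hirr, hasym⟩ := hG
  rcases hmem b₁ (by simp) with rfl | rfl | rfl <;> rcases hmem b₂ (by simp) with rfl | rfl | rfl <;>
    rcases hmem b₃ (by simp) with rfl | rfl | rfl <;> grind

lemma cycIn_add_trnIn_le_choose (hG : IsOriented G) (A : Finset (Fin n)) :
    cycIn G A + trnIn G A ≤ A.card.choose 3 := by
  rw [cycIn, trnIn, ← card_union_of_disjoint, ← card_powersetCard]
  · exact card_le_card (union_subset (filter_subset _ _) (filter_subset _ _))
  · exact disjoint_filter.2 fun s _ hc ht => hG.not_isCycTri_and_isTrnTri s ⟨hc, ht⟩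

lemma trnIn_eq_sum (hG : IsOriented G) (A : Finset (Fin n)) :
    trnIn G A = ∑ x ∈ A, ∑ y ∈ A, ∑ z ∈ A, if G x y ∧ G y z ∧ G x z then 1 else 0 := by
  suffices trnIn G A =
      ((A ×ˢ A ×ˢ A).filter fun x => G x.1 x.2.1 ∧ G x.2.1 x.2.2 ∧ G x.1 x.2.2).card by
    simpa only [card_filter, sum_product] using this
  refine (card_bij (fun x _ => ({x.1, x.2.1, x.2.2} : Finset (Fin n))) ?_ ?_ ?_).symm
  · rintro ⟨a₁, a₂, a₃⟩ hx
    simp only [mem_filter, mem_product] at hx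
    obtain ⟨⟨h₁, h₂, h₃⟩, e₁₂, e₂₃, e₁₃⟩ := hx
    have hne : ∀ {u v}, G u v → u ≠ v := fun h huv => hG.1 _ (huv ▸ h)
    simp only [mem_filter, mem_powersetCard]
    refine ⟨⟨?_, ?_⟩, a₁, a₂, a₃, e₁₂, e₂₃, e₁₃, rfl⟩
    · simp [insert_subset_iff, h₁, h₂, h₃]
    · rw [card_insert_of_notMem (by simp [hne e₁₂, hne e₁₃]),
        card_insert_of_notMem (by simp [hne e₂₃]), card_singleton]
  · rintro ⟨a₁, a₂, a₃⟩ ha ⟨b₁, b₂, b₃⟩ hb h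
    simp only [mem_filter] at ha hb
    obtain ⟨rfl, rfl, rfl⟩ := hG.eq_of_transitive_of_transitive ha.2 hb.2 h
    rfl
  · intro s hs
    simp only [mem_filter, mem_powersetCard] at hs
    obtain ⟨⟨hsub, -⟩, a, b, c, hab, hbc, hac, rfl⟩ := hs
    refine ⟨(a, b, c), ?_, rfl⟩
    simp only [insert_subset_iff, singleton_subset_iff] at hsub
    simp [hsub, hab, hbc, hac]

lemma trnIn_eq_sum_eOut_outNbrs (hG : IsOriented G) (A : Finset (Fin n)) :
    trnIn G A = ∑ v ∈ A, eOut G (A.filter fun u => G v u) (A.filter fun u => G v u) := by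
  rw [trnIn_eq_sum hG]
  refine sum_congr rfl fun v _ => ?_
  simp only [eOut, outDegOn, sum_filter, card_filter]
  refine sum_congr rfl fun u _ => ?_
  by_cases hu : G v u <;> simp [hu, ← ite_and, and_comm]

lemma trnIn_eq_sum_eOut_inNbrs (hG : IsOriented G) (A : Finset (Fin n)) :
    trnIn G A = ∑ v ∈ A, eOut G (A.filter fun u => G u v) (A.filter fun u => G u v) := by
  rw [trnIn_eq_sum hG, sum_congr rfl fun x _ => sum_comm, sum_comm]
  refine sum_congr rfl fun v _ => ?_
  simp only [eOut, outDegOn, sum_filter, card_filter]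
  refine sum_congr rfl fun u _ => ?_
  by_cases hu : G u v <;> simp [hu, ← ite_and, and_comm]

theorem card_pow_three_div_eight_sub_le_trnIn (hG : IsOriented G) {c : ℝ} (hc : 0 ≤ c)
    (hδ : MinSemidegreeGE G ((1 / 2 - c) * n)) (A : Finset (Fin n)) :
    (A.card : ℝ) ^ 3 / 8 - c * n ^ 3 ≤ trnIn G A := by
  set a : ℝ := (A.card : ℝ)
  set k : ℝ := 2 * c * n
  have han : a ≤ n := by simpa [a] using card_le_univ A
  have hnonadj : ∀ v S, (nonadjDegOn G v S : ℝ) ≤ k - 1 := fun v S => by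
    have := nonadjDegOn_univ_le hG hδ v
    have : (nonadjDegOn G v S : ℝ) ≤ nonadjDegOn G v univ := by
      exact_mod_cast nonadjDegOn_mono v (subset_univ S)
    linarith
  have hedges : ∀ S : Finset (Fin n), (S.card : ℝ) * (S.card - k) ≤ 2 * eOut G S S := fun S => by
    have := card_mul_le_two_mul_eOut hG (r := k - 1) fun v _ => hnonadj v S
    linarith
  have hvertex : ∀ v ∈ A, a ^ 2 / 2 - 2 * k * n ≤
      2 * (eOut G (A.filter fun u => G v u) (A.filter fun u => G v u) : ℝ) +
        2 * eOut G (A.filter fun u => G u v) (A.filter fun u => G u v) := fun v hv => by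
    have hA := congrArg (Nat.cast : ℕ → ℝ)
      (card_eq_one_add_outDegOn_add_inDegOn_add_nonadjDegOn hG hv)
    push_cast at hA
    have hout : (outDegOn G v A : ℝ) * (outDegOn G v A - k) ≤ _ := hedges (A.filter fun u => G v u)
    have hin : (inDegOn G v A : ℝ) * (inDegOn G v A - k) ≤ _ := hedges (A.filter fun u => G u v)
    have := half_sq_sub_le_mul_sub_add_mul_sub (a := a) (k := k) (m := n)
      (Nat.cast_nonneg (outDegOn G v A)) (Nat.cast_nonneg (inDegOn G v A))
      (by linarith [hnonadj v A]) (by linarith [(nonadjDegOn G v A).cast_nonneg (α := ℝ)]) han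
    linarith
  have hsum : a * (a ^ 2 / 2 - 2 * k * n) ≤ 4 * trnIn G A := by
    calc a * (a ^ 2 / 2 - 2 * k * n)
        ≤ ∑ v ∈ A, (2 * (eOut G (A.filter fun u => G v u) (A.filter fun u => G v u) : ℝ) +
            2 * eOut G (A.filter fun u => G u v) (A.filter fun u => G u v)) := by
          simpa using card_nsmul_le_sum A _ _ hvertex
      _ = 4 * trnIn G A := by
          have hout := congrArg (Nat.cast : ℕ → ℝ) (trnIn_eq_sum_eOut_outNbrs hG A)
          have hin := congrArg (Nat.cast : ℕ → ℝ) (trnIn_eq_sum_eOut_inNbrs hG A)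
          push_cast at hout hin
          rw [sum_add_distrib, ← mul_sum, ← mul_sum, ← hout, ← hin]
          ring
  nlinarith [mul_le_mul_of_nonneg_left han (by positivity : 0 ≤ c * n ^ 2)]

theorem cycIn_add_trnIn_le_card_pow_three_div_six (hG : IsOriented G) (A : Finset (Fin n)) :
    (cycIn G A + trnIn G A : ℝ) ≤ (A.card : ℝ) ^ 3 / 6 := by
  calc (cycIn G A + trnIn G A : ℝ) ≤ A.card.choose 3 := by
        exact_mod_cast cycIn_add_trnIn_le_choose hG A
    _ ≤ (A.card : ℝ) ^ 3 / (Nat.factorial 3 : ℕ) := Nat.choose_le_pow_div 3 _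
    _ = (A.card : ℝ) ^ 3 / 6 := by norm_num [Nat.factorial]

end Oriented

theorem stmt_10 (c : ℝ) (hc : 0 < c) :
    ∃ N : ℕ, ∀ n : ℕ, N ≤ n → ∀ G : Fin n → Fin n → Prop, IsOriented G →
      MinSemidegreeGE G ((1/2 - c) * n) →
      ∀ A : Finset (Fin n),
        (A.card : ℝ)^3 / 8 - c * n^3 ≤ (trnIn G A : ℝ) ∧
        3 * (cycIn G A : ℝ) - (trnIn G A : ℝ) ≤ 4 * c * n^3 := by
  refine ⟨0, fun n _ G hG hδ A => ?_⟩
  have htrn := card_pow_three_div_eight_sub_le_trnIn hG hc.le hδ A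
  have htri := cycIn_add_trnIn_le_card_pow_three_div_six hG A
  exact ⟨htrn, by linarith⟩
end
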